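/- Let F be a continuous CDF on [0, x̄] and F̂ a CDF on [0, x̄] with sup_x | F̂(x) − F(x) | ≤ Δ. Let p* ∈ ℝ^n satisfy p*_i > 0 for all i and Σ_i p*_i = 1, and suppose λ̂, λ* ∈ ℝ^n satisfy p_j( F̂ ⊗ … ⊗ F̂, λ̂ ) = p*_j for all j and p_j( F ⊗ … ⊗ F, λ* ) = p*_j for all j. Let X_1, …, X_m be i.i.d. random vectors with distribution F ⊗ … ⊗ F on [0, x̄]^n. Then for each i and each δ ∈ (0,1), with probability at least 1 − δ, m · E[ X_i · 1{X ∈ L_i(λ*)} ] − Σ_{t=1}^m X_{t,i} · 1{ X_t ∈ L_i(λ̂) } ≤ n Δ x̄ m + x̄ √( (m/2) · log(2/δ) ), where X ∼ F ⊗ … ⊗ F. -/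

import Mathlib

/-!
Let `U` and `V` be agent `i`'s cells under `λ*` and `λ̂`, and let `T` be the set of agents whose
dual variable rose at least as much as `λ̂ᵢ - λ*ᵢ`. The region where some agent of `T` beats
every agent outside `T` only grows from `λ*` to `λ̂`, and every point of `U \ V` off the null
set of ties lies in the increment. Because the cells exhaust the box, the region has mass
`∑_{j ∈ T} p*ⱼ` both under `F̂ⁿ` for `λ̂` and under `Fⁿ` for `λ*`. Its sections along a
coordinate are rays, so trading the factors `F̂` for `F` one at a time costs at most `Δ` per
coordinate; hence `Fⁿ(U \ V) ≤ nΔ` and the expected utility of `λ̂` under `F` is within `nΔx̄`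
of that of `λ*`. The sampling error of the `m` rounds, i.i.d. and valued in `[0, x̄]`, is
controlled by Hoeffding's inequality.
-/

open MeasureTheory ProbabilityTheory Real

noncomputable section

/-- CDF of a measure on `ℝ`. -/
def mcdf (μ : Measure ℝ) (x : ℝ) : ℝ := (μ (Set.Iic x)).toReal

/-- The Laguerre cell `L_i(λ) = {x ∈ [0,x̄]^n : x_i + λ_i > x_j + λ_j ∀ j ≠ i}`. -/
def laguerre {n : ℕ} (xbar : ℝ) (lam : Fin n → ℝ) (i : Fin n) : Set (Fin n → ℝ) :=
  {x | (∀ j, x j ∈ Set.Icc (0 : ℝ) xbar) ∧ ∀ j, j ≠ i → x j + lam j < x i + lam i}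

open Set
open scoped ENNReal

lemma IsUpperSet.eq_univ_or_Ioi_subset_subset_Ici {α : Type*} [ConditionallyCompleteLinearOrder α]
    {C : Set α} (hC : IsUpperSet C) (hne : C.Nonempty) : C = univ ∨ ∃ a, Ioi a ⊆ C ∧ C ⊆ Ici a := by
  by_cases hbdd : BddBelow C
  · refine Or.inr ⟨sInf C, fun x hx => ?_, fun c hc => csInf_le hbdd hc⟩
    obtain ⟨c, hc, hcx⟩ := (csInf_lt_iff hbdd hne).mp hx
    exact hC hcx.le hc
  · refine Or.inl (eq_univ_of_forall fun x => ?_)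
    obtain ⟨c, hc, hcx⟩ := not_bddBelow_iff.mp hbdd x
    exact hC hcx.le hc

lemma IsLowerSet.eq_univ_or_Iio_subset_subset_Iic {α : Type*} [ConditionallyCompleteLinearOrder α]
    {C : Set α} (hC : IsLowerSet C) (hne : C.Nonempty) : C = univ ∨ ∃ a, Iio a ⊆ C ∧ C ⊆ Iic a := by
  by_cases hbdd : BddAbove C
  · refine Or.inr ⟨sSup C, fun x hx => ?_, fun c hc => le_csSup hbdd hc⟩
    obtain ⟨c, hc, hxc⟩ := (lt_csSup_iff hbdd hne).mp hx
    exact hC hxc.le hc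
  · refine Or.inl (eq_univ_of_forall fun x => ?_)
    obtain ⟨c, hc, hxc⟩ := not_bddAbove_iff.mp hbdd x
    exact hC hxc.le hc

lemma setIntegral_le_setIntegral_add_mul_measureReal_sdiff {β : Type*} [MeasurableSpace β]
    {μ : Measure β} [IsFiniteMeasure μ] {f : β → ℝ} {U V : Set β} {c : ℝ}
    (hU : MeasurableSet U) (hV : MeasurableSet V) (hf : AEStronglyMeasurable f μ)
    (hfc : ∀ x ∈ U ∪ V, f x ∈ Icc 0 c) :
    ∫ x in U, f x ∂μ ≤ ∫ x in V, f x ∂μ + c * μ.real (U \ V) := by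
  have hnorm : ∀ x ∈ U ∪ V, ‖f x‖ ≤ c := fun x hx => by
    rw [Real.norm_of_nonneg (hfc x hx).1]; exact (hfc x hx).2
  have hint {W : Set β} (hWm : MeasurableSet W) (hW : W ⊆ U ∪ V) : IntegrableOn f W μ :=
    Measure.integrableOn_of_bounded (measure_ne_top μ W) hf
      (ae_restrict_of_forall_mem hWm fun x hx => hnorm x (hW hx))
  rw [← integral_inter_add_sdiff hV (hint hU subset_union_left)]
  refine add_le_add ?_ ((le_abs_self _).trans ?_)
  · exact setIntegral_mono_set (hint hV subset_union_right)
      (ae_restrict_of_forall_mem hV fun x hx => (hfc x (Or.inr hx)).1)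
      (ae_of_all _ inter_subset_right)
  · exact norm_setIntegral_le_of_norm_le_const (measure_lt_top μ _)
      fun x hx => hnorm x (Or.inl hx.1)

lemma measureReal_sum_integral_sub_ge_le_exp {Ω ι : Type*} [MeasurableSpace Ω] {μ : Measure Ω}
    [IsProbabilityMeasure μ] [Fintype ι] {Y : ι → Ω → ℝ} (hindep : iIndepFun Y μ)
    (hmeas : ∀ t, AEMeasurable (Y t) μ) {a b : ℝ} (hY : ∀ t, ∀ᵐ ω ∂μ, Y t ω ∈ Icc a b)
    {ε : ℝ} (hε : 0 ≤ ε) :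
    μ.real {ω | ε ≤ ∑ t, (μ[Y t] - Y t ω)} ≤
      exp (-2 * ε ^ 2 / (Fintype.card ι * (b - a) ^ 2)) := by
  have hsub (t : ι) : HasSubgaussianMGF (fun ω => -Y t ω - μ[fun ω => -Y t ω])
      ((‖-a - -b‖₊ / 2) ^ 2) μ :=
    hasSubgaussianMGF_of_mem_Icc (hmeas t).neg
      (by filter_upwards [hY t] with ω h using ⟨neg_le_neg h.2, neg_le_neg h.1⟩)
  have hind := hindep.comp (fun t (x : ℝ) => -x - μ[fun ω => -Y t ω]) (fun t => by fun_prop)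
  have hset : {ω | ε ≤ ∑ t, (μ[Y t] - Y t ω)} =
      {ω | ε ≤ ∑ t ∈ Finset.univ, ((fun x => -x - μ[fun ω => -Y t ω]) ∘ Y t) ω} := by
    simp only [Function.comp_apply, integral_neg, sub_neg_eq_add, neg_add_eq_sub]
  rw [hset]
  refine (HasSubgaussianMGF.measure_sum_ge_le_of_iIndepFun hind (fun t _ => hsub t) hε).trans_eq ?_
  congr 1
  push_cast
  simp only [Finset.sum_const, Finset.card_univ, nsmul_eq_mul, div_pow, Real.norm_eq_abs,
    sq_abs, neg_sub_neg]
  generalize (b - a) ^ 2 = d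
  ring

lemma measureReal_sum_integral_sub_ge_le_of_identDistrib {Ω E : Type*} [MeasurableSpace Ω] [MeasurableSpace E]
    {μ : Measure Ω} [IsProbabilityMeasure μ] {ν : Measure E} {m : ℕ} {X : Fin m → Ω → E}
    (hXmeas : ∀ t, Measurable (X t)) (hXindep : iIndepFun X μ) (hXlaw : ∀ t, μ.map (X t) = ν)
    {g : E → ℝ} (hg : Measurable g) {c : ℝ} (hgc : ∀ x, g x ∈ Icc 0 c) (hm : 0 < m) (hc : 0 < c)
    {δ : ℝ} (hδ : δ ∈ Ioc 0 2) :
    μ.real {ω | c * √(m / 2 * log (2 / δ)) ≤ ∑ t, (∫ x, g x ∂ν - g (X t ω))} ≤ δ / 2 := by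
  have hmean (t : Fin m) : μ[fun ω => g (X t ω)] = ∫ x, g x ∂ν := by
    rw [← hXlaw t, integral_map (hXmeas t).aemeasurable hg.aestronglyMeasurable]
  have hlog : 0 ≤ log (2 / δ) := log_nonneg ((le_div_iff₀ hδ.1).2 (by linarith [hδ.2]))
  have h := measureReal_sum_integral_sub_ge_le_exp (Y := fun t ω => g (X t ω))
    (hXindep.comp (fun _ => g) fun _ => hg) (fun t => (hg.comp (hXmeas t)).aemeasurable)
    (fun t => ae_of_all _ fun ω => hgc _) (by positivity : 0 ≤ c * √(m / 2 * log (2 / δ)))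
  simp only [hmean] at h
  refine h.trans_eq ?_
  have hm' : (0 : ℝ) < m := Nat.cast_pos.2 hm
  rw [Fintype.card_fin, sub_zero, mul_pow, sq_sqrt (by positivity),
    show -2 * (c ^ 2 * (m / 2 * log (2 / δ))) / (m * c ^ 2) = -log (2 / δ) by field_simp,
    exp_neg, exp_log (div_pos two_pos hδ.1), inv_div]

lemma ofReal_one_sub_le_of_measureReal_compl_le {Ω : Type*} [MeasurableSpace Ω]
    {μ : Measure Ω} [IsProbabilityMeasure μ] {s : Set Ω} {δ : ℝ} (h : μ.real sᶜ ≤ δ) :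
    ENNReal.ofReal (1 - δ) ≤ μ s := by
  rw [← ofReal_measureReal]
  refine ENNReal.ofReal_le_ofReal ?_
  have := measureReal_union_le (μ := μ) s sᶜ
  rw [union_compl_self, probReal_univ] at this
  linarith

lemma lt_of_measure_Icc_eq_one {μ : Measure ℝ} [NullSingletonClass μ] {a b : ℝ}
    (h : μ (Icc a b) = 1) : a < b := by
  by_contra! hba
  have : Icc a b ⊆ {a} := fun x hx => le_antisymm (hx.2.trans hba) hx.1
  simpa [h] using measure_mono_null this (measure_singleton (μ := μ) a)

section OneDim

variable {μ ν : Measure ℝ} {Δ : ℝ}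

lemma mcdf_eq_measureReal (μ : Measure ℝ) (x : ℝ) : mcdf μ x = μ.real (Iic x) := rfl

lemma mcdf_le_measureReal_Iio_add [IsFiniteMeasure μ] (hν : Continuous (mcdf ν))
    (hclose : ∀ x, |mcdf μ x - mcdf ν x| ≤ Δ) (b : ℝ) :
    mcdf ν b ≤ μ.real (Iio b) + Δ := by
  refine le_of_tendsto ((hν.tendsto b).mono_left (nhdsWithin_le_nhds (s := Iio b))) ?_
  filter_upwards [self_mem_nhdsWithin] with t (ht : t < b)
  have : mcdf μ t ≤ μ.real (Iio b) := measureReal_mono (Iic_subset_Iio.mpr ht)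
  linarith [(abs_le.mp (hclose t)).1]

lemma nullSingletonClass_of_continuous_mcdf [IsFiniteMeasure μ] (hμ : Continuous (mcdf μ)) :
    NullSingletonClass μ := by
  refine ⟨fun a => (measureReal_eq_zero_iff).mp (le_antisymm ?_ measureReal_nonneg)⟩
  have h := mcdf_le_measureReal_Iio_add (μ := μ) (Δ := 0) hμ (fun x => by simp) a
  rw [mcdf_eq_measureReal, ← Iio_union_right,
    measureReal_union (by simp) (measurableSet_singleton a)] at h
  linarith

lemma measureReal_le_add_of_Ioi_subset_Ici [IsProbabilityMeasure μ] [IsProbabilityMeasure ν]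
    (hν : Continuous (mcdf ν))
    (hclose : ∀ x, |mcdf μ x - mcdf ν x| ≤ Δ) {C : Set ℝ} {a : ℝ} (hIoi : Ioi a ⊆ C)
    (hIci : C ⊆ Ici a) : ν.real C ≤ μ.real C + Δ := by
  have hν' := mcdf_le_measureReal_Iio_add (μ := ν) (Δ := 0) hν (fun x => by simp) a
  have hμ : μ.real (Ioi a) = 1 - mcdf μ a := by
    rw [← compl_Iic, measureReal_compl measurableSet_Iic, probReal_univ, mcdf_eq_measureReal]
  have hνC : ν.real C ≤ 1 - ν.real (Iio a) := by
    rw [← probReal_univ (μ := ν), ← measureReal_compl measurableSet_Iio, compl_Iio]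
    exact measureReal_mono hIci
  linarith [measureReal_mono (μ := μ) hIoi, (abs_le.mp (hclose a)).2]

lemma measureReal_le_add_of_Iio_subset_Iic [IsFiniteMeasure μ] [IsFiniteMeasure ν]
    (hν : Continuous (mcdf ν))
    (hclose : ∀ x, |mcdf μ x - mcdf ν x| ≤ Δ) {C : Set ℝ} {a : ℝ} (hIio : Iio a ⊆ C)
    (hIic : C ⊆ Iic a) : ν.real C ≤ μ.real C + Δ := by
  linarith [mcdf_le_measureReal_Iio_add hν hclose a, measureReal_mono (μ := μ) hIio,
    measureReal_mono (μ := ν) hIic, mcdf_eq_measureReal ν a]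

lemma measureReal_le_add_of_isUpperSet_or_isLowerSet [IsProbabilityMeasure μ]
    [IsProbabilityMeasure ν] (hν : Continuous (mcdf ν))
    (hclose : ∀ x, |mcdf μ x - mcdf ν x| ≤ Δ) {C : Set ℝ}
    (hC : IsUpperSet C ∨ IsLowerSet C) : ν.real C ≤ μ.real C + Δ := by
  have hΔ : 0 ≤ Δ := (abs_nonneg _).trans (hclose 0)
  rcases C.eq_empty_or_nonempty with rfl | hne
  · simpa using hΔ
  rcases hC with hC | hC
  · rcases hC.eq_univ_or_Ioi_subset_subset_Ici hne with rfl | ⟨a, hIoi, hIci⟩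
    · simpa using hΔ
    · exact measureReal_le_add_of_Ioi_subset_Ici hν hclose hIoi hIci
  · rcases hC.eq_univ_or_Iio_subset_subset_Iic hne with rfl | ⟨a, hIio, hIic⟩
    · simpa using hΔ
    · exact measureReal_le_add_of_Iio_subset_Iic hν hclose hIio hIic

end OneDim

section Product

variable {α : Type*} [MeasurableSpace α]

lemma pi_eq_prod_preimage_insertNth {n : ℕ} (μ : Measure α) [SigmaFinite μ] (k : Fin (n + 1))
    (A : Set (Fin (n + 1) → α)) :
    Measure.pi (fun _ => μ) A =
      (μ.prod (Measure.pi fun _ : Fin n => μ)) ((fun p => Fin.insertNth k p.1 p.2) ⁻¹' A) :=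
  ((measurePreserving_piFinSuccAbove (fun _ => μ) k).symm _).measure_preimage_equiv A |>.symm

lemma measurable_insertNth_uncurry {n : ℕ} (k : Fin (n + 1)) :
    Measurable fun p : α × (Fin n → α) => Fin.insertNth (α := fun _ => α) k p.1 p.2 :=
  (MeasurableEquiv.piFinSuccAbove (fun _ => α) k).symm.measurable

lemma pi_eq_zero_of_forall_insertNth {n : ℕ} (μ : Measure α) [SigmaFinite μ] (k : Fin (n + 1))
    {A : Set (Fin (n + 1) → α)} (hA : MeasurableSet A)
    (h : ∀ y, μ {t | Fin.insertNth k t y ∈ A} = 0) : Measure.pi (fun _ => μ) A = 0 := by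
  rw [pi_eq_prod_preimage_insertNth μ k,
    Measure.prod_apply_symm (hA.preimage (measurable_insertNth_uncurry k))]
  simp [preimage, h]

lemma ae_injective_add {n : ℕ} (μ : Measure ℝ) [SigmaFinite μ] [NullSingletonClass μ]
    (c : Fin n → ℝ) : ∀ᵐ x ∂(Measure.pi fun _ : Fin n => μ), Function.Injective (x + c) := by
  refine ae_all_iff.2 fun j => ae_all_iff.2 fun k => ?_
  rcases eq_or_ne j k with rfl | hjk
  · exact ae_of_all _ fun _ _ => rfl
  obtain ⟨m, rfl⟩ := Nat.exists_eq_add_one_of_ne_zero (Fin.pos j).ne'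
  obtain ⟨d, rfl⟩ := Fin.exists_succAbove_eq hjk.symm
  simp only [ae_iff, Pi.add_apply, hjk, imp_false, not_not]
  refine pi_eq_zero_of_forall_insertNth μ j (measurableSet_eq_fun (by fun_prop) (by fun_prop))
    fun y => measure_mono_null (fun t ht => ?_) (measure_singleton (y d + c (j.succAbove d) - c j))
  simp only [mem_ofPred_eq, Fin.insertNth_apply_same, Fin.insertNth_apply_succAbove] at ht
  simp only [mem_singleton_iff]
  linarith

lemma pi_le_pi_add_of_forall_update (μ ν : Measure α) [IsProbabilityMeasure μ]
    [IsProbabilityMeasure ν] (ε : ℝ≥0∞) :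
    ∀ {n : ℕ} {A : Set (Fin n → α)}, MeasurableSet A →
      (∀ k (x : Fin n → α), μ {t | Function.update x k t ∈ A} ≤
        ν {t | Function.update x k t ∈ A} + ε) →
      Measure.pi (fun _ => μ) A ≤ Measure.pi (fun _ => ν) A + n * ε
  | 0, A, _, _ => by
    rw [Measure.pi_of_empty (x := Fin.elim0), Measure.pi_of_empty (x := Fin.elim0)]
    simp
  | n + 1, A, hA, hsec => by
    set E := (fun p : α × (Fin n → α) => Fin.insertNth (α := fun _ => α) 0 p.1 p.2) ⁻¹' A
    have hE : MeasurableSet E := hA.preimage (measurable_insertNth_uncurry 0)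
    have hslice (t : α) : Measure.pi (fun _ => μ) (Prod.mk t ⁻¹' E) ≤
        Measure.pi (fun _ => ν) (Prod.mk t ⁻¹' E) + n * ε :=
      pi_le_pi_add_of_forall_update μ ν ε (measurable_prodMk_left hE) fun k x => by
        simpa [E, preimage, Fin.insertNth_zero', Fin.cons_update] using hsec k.succ (Fin.cons t x)
    have hfiber (y : Fin n → α) : μ ((·, y) ⁻¹' E) ≤ ν ((·, y) ⁻¹' E) + ε := by
      obtain ⟨c⟩ := nonempty_of_isProbabilityMeasure μ
      simpa [E, preimage, Fin.insertNth_zero', Fin.update_cons_zero] using hsec 0 (Fin.cons c y)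
    calc Measure.pi (fun _ => μ) A
        = ∫⁻ t, Measure.pi (fun _ => μ) (Prod.mk t ⁻¹' E) ∂μ := by
          rw [pi_eq_prod_preimage_insertNth μ 0, Measure.prod_apply hE]
      _ ≤ ∫⁻ t, (Measure.pi (fun _ => ν) (Prod.mk t ⁻¹' E) + n * ε) ∂μ := lintegral_mono hslice
      _ = ∫⁻ y, μ ((·, y) ⁻¹' E) ∂(Measure.pi fun _ => ν) + n * ε := by
          rw [lintegral_add_right _ measurable_const, lintegral_const, measure_univ, mul_one,
            ← Measure.prod_apply hE, Measure.prod_apply_symm hE]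
      _ ≤ ∫⁻ y, (ν ((·, y) ⁻¹' E) + ε) ∂(Measure.pi fun _ => ν) + n * ε := by
          gcongr with y; exact hfiber y
      _ = Measure.pi (fun _ => ν) A + (n + 1 : ℕ) * ε := by
          rw [lintegral_add_right _ measurable_const, lintegral_const, measure_univ, mul_one,
            ← Measure.prod_apply_symm hE, ← pi_eq_prod_preimage_insertNth ν 0]
          push_cast
          ring

end Product

section Laguerre

variable {n : ℕ} {xbar : ℝ}

def groupCell (lam : Fin n → ℝ) (S : Finset (Fin n)) : Set (Fin n → ℝ) :=
  {x | ∃ j ∈ S, ∀ k ∉ S, x k + lam k < x j + lam j}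

lemma measurableSet_laguerre (lam : Fin n → ℝ) (i : Fin n) :
    MeasurableSet (laguerre xbar lam i) := by
  unfold laguerre
  measurability

lemma measurableSet_groupCell (lam : Fin n → ℝ) (S : Finset (Fin n)) :
    MeasurableSet (groupCell lam S) := by
  unfold groupCell
  measurability

lemma pairwise_disjoint_laguerre (lam : Fin n → ℝ) :
    Pairwise (Function.onFun Disjoint (laguerre xbar lam)) := by
  intro j k hjk
  refine disjoint_left.2 fun x hxj hxk => ?_
  exact (hxj.2 k hjk.symm).not_gt (hxk.2 j hjk)

lemma mem_groupCell_iff_of_mem_laguerre {lam : Fin n → ℝ} {S : Finset (Fin n)} {x : Fin n → ℝ}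
    {k : Fin n} (hx : x ∈ laguerre xbar lam k) : x ∈ groupCell lam S ↔ k ∈ S := by
  refine ⟨fun ⟨j, hj, hwin⟩ => ?_,
    fun hk => ⟨k, hk, fun l hl => hx.2 l (ne_of_mem_of_not_mem hk hl).symm⟩⟩
  by_contra hk
  exact (hwin k hk).not_gt (hx.2 j (ne_of_mem_of_not_mem hj hk))

lemma mem_groupCell_of_le {lam : Fin n → ℝ} {S : Finset (Fin n)} {y y' : Fin n → ℝ}
    (hS : ∀ j ∈ S, y j ≤ y' j) (hSc : ∀ k ∉ S, y' k ≤ y k) (hy : y ∈ groupCell lam S) :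
    y' ∈ groupCell lam S := by
  obtain ⟨j, hj, hwin⟩ := hy
  exact ⟨j, hj, fun k hk => by linarith [hwin k hk, hS j hj, hSc k hk]⟩

lemma isUpperSet_or_isLowerSet_update_groupCell (lam : Fin n → ℝ) (S : Finset (Fin n))
    (k : Fin n) (x : Fin n → ℝ) :
    IsUpperSet {t | Function.update x k t ∈ groupCell lam S} ∨
      IsLowerSet {t | Function.update x k t ∈ groupCell lam S} := by
  by_cases hk : k ∈ S
  · refine Or.inl fun s t hst hs => mem_groupCell_of_le (fun j _ => ?_) (fun l hl => ?_) hs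
    · exact Function.update_mono hst j
    · rw [Function.update_of_ne (ne_of_mem_of_not_mem hk hl).symm,
        Function.update_of_ne (ne_of_mem_of_not_mem hk hl).symm]
  · refine Or.inr fun s t hst hs => mem_groupCell_of_le (fun j hj => ?_) (fun l _ => ?_) hs
    · rw [Function.update_of_ne (ne_of_mem_of_not_mem hj hk),
        Function.update_of_ne (ne_of_mem_of_not_mem hj hk)]
    · exact Function.update_mono hst l

lemma groupCell_subset_groupCell {lam lam' : Fin n → ℝ} {S : Finset (Fin n)}
    (hS : ∀ j ∈ S, ∀ k ∉ S, lam' k - lam k ≤ lam' j - lam j) :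
    groupCell lam S ⊆ groupCell lam' S := by
  rintro x ⟨j, hj, hwin⟩
  exact ⟨j, hj, fun k hk => by linarith [hwin k hk, hS j hj k hk]⟩

lemma mem_iUnion_laguerre_of_injective [Nonempty (Fin n)] {lam x : Fin n → ℝ}
    (hx : ∀ j, x j ∈ Icc 0 xbar) (hinj : Function.Injective (x + lam)) :
    x ∈ ⋃ j, laguerre xbar lam j := by
  obtain ⟨j, -, hmax⟩ := Finset.univ.exists_max_image (x + lam) Finset.univ_nonempty
  exact mem_iUnion.2 ⟨j, hx, fun k hk =>
    (hmax k (Finset.mem_univ k)).lt_of_ne fun h => hk (hinj h)⟩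

def overtakers (lam lam' : Fin n → ℝ) (i : Fin n) : Finset (Fin n) :=
  Finset.univ.filter fun j => j ≠ i ∧ lam' i - lam i ≤ lam' j - lam j

lemma sub_le_sub_of_mem_overtakers {lam lam' : Fin n → ℝ} {i j k : Fin n}
    (hj : j ∈ overtakers lam lam' i) (hk : k ∉ overtakers lam lam' i) :
    lam' k - lam k ≤ lam' j - lam j := by
  simp only [overtakers, Finset.mem_filter, Finset.mem_univ, true_and, not_and, not_le] at hj hk
  rcases eq_or_ne k i with rfl | hki
  · exact hj.2
  · linarith [hk hki, hj.2]

lemma mem_groupCell_sdiff_of_mem_laguerre {lam lam' x : Fin n → ℝ} {i k : Fin n}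
    (hi : x ∈ laguerre xbar lam i) (hk : x ∈ laguerre xbar lam' k) (hki : k ≠ i) :
    x ∈ groupCell lam' (overtakers lam lam' i) \ groupCell lam (overtakers lam lam' i) := by
  have hkT : k ∈ overtakers lam lam' i := by
    simp only [overtakers, Finset.mem_filter, Finset.mem_univ, true_and]
    exact ⟨hki, by linarith [hi.2 k hki, hk.2 i hki.symm]⟩
  have hiT : i ∉ overtakers lam lam' i := by simp [overtakers]
  exact ⟨(mem_groupCell_iff_of_mem_laguerre hk).2 hkT,
    fun h => hiT ((mem_groupCell_iff_of_mem_laguerre hi).1 h)⟩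

end Laguerre

section CellMeasures

variable {n : ℕ} {xbar : ℝ}

lemma ae_mem_iUnion_laguerre {ν : Measure (Fin n → ℝ)} [IsProbabilityMeasure ν]
    {lam : Fin n → ℝ} (h : ∑ j, ν.real (laguerre xbar lam j) = 1) :
    ∀ᵐ x ∂ν, x ∈ ⋃ j, laguerre xbar lam j := by
  have hU : MeasurableSet (⋃ j, laguerre xbar lam j) :=
    MeasurableSet.iUnion fun j => measurableSet_laguerre lam j
  rw [← measureReal_iUnion_fintype (pairwise_disjoint_laguerre lam)
    (fun j => measurableSet_laguerre lam j)] at h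
  exact (prob_compl_eq_zero_iff hU).2 ((ENNReal.toReal_eq_one_iff _).1 h)

lemma measureReal_groupCell {ν : Measure (Fin n → ℝ)} [IsFiniteMeasure ν] {lam : Fin n → ℝ}
    (hν : ∀ᵐ x ∂ν, x ∈ ⋃ j, laguerre xbar lam j) (S : Finset (Fin n)) :
    ν.real (groupCell lam S) = ∑ j ∈ S, ν.real (laguerre xbar lam j) := by
  rw [← measureReal_biUnion_finset (fun j _ k _ hjk => pairwise_disjoint_laguerre lam hjk)
    (fun j _ => measurableSet_laguerre lam j)]
  refine measureReal_congr (Filter.eventuallyEq_set.2 ?_)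
  filter_upwards [hν] with x hx
  obtain ⟨k, hk⟩ := mem_iUnion.1 hx
  simp only [mem_iUnion₂, mem_groupCell_iff_of_mem_laguerre hk, exists_prop]
  refine ⟨fun h => ⟨k, h, hk⟩, fun ⟨j, hj, hxj⟩ => ?_⟩
  rwa [(pairwise_disjoint_laguerre lam).eq (not_disjoint_iff.2 ⟨x, hk, hxj⟩)]

lemma measureReal_groupCell_le_add {Fm Fhat : Measure ℝ} [IsProbabilityMeasure Fm]
    [IsProbabilityMeasure Fhat] {Δ : ℝ} (hFcont : Continuous (mcdf Fm))
    (hclose : ∀ x, |mcdf Fhat x - mcdf Fm x| ≤ Δ) (lam : Fin n → ℝ) (S : Finset (Fin n)) :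
    (Measure.pi fun _ : Fin n => Fm).real (groupCell lam S) ≤
      (Measure.pi fun _ : Fin n => Fhat).real (groupCell lam S) + n * Δ := by
  have hΔ : 0 ≤ Δ := (abs_nonneg _).trans (hclose 0)
  have h := pi_le_pi_add_of_forall_update Fm Fhat (ENNReal.ofReal Δ)
    (measurableSet_groupCell lam S) fun k x => by
      rw [← ofReal_measureReal, ← ofReal_measureReal, ← ENNReal.ofReal_add measureReal_nonneg hΔ]
      exact ENNReal.ofReal_le_ofReal (measureReal_le_add_of_isUpperSet_or_isLowerSet hFcont
        hclose (isUpperSet_or_isLowerSet_update_groupCell lam S k x))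
  have := ENNReal.toReal_mono (by finiteness) h
  rwa [ENNReal.toReal_add (by finiteness) (by finiteness), ENNReal.toReal_mul,
    ENNReal.toReal_natCast, ENNReal.toReal_ofReal hΔ] at this

lemma measureReal_laguerre_sdiff_le {Fm Fhat : Measure ℝ} [IsProbabilityMeasure Fm]
    [IsProbabilityMeasure Fhat] {Δ : ℝ} (hFcont : Continuous (mcdf Fm))
    (hclose : ∀ x, |mcdf Fhat x - mcdf Fm x| ≤ Δ) {lam lam' : Fin n → ℝ}
    (hsum : ∑ j, (Measure.pi fun _ : Fin n => Fm).real (laguerre xbar lam j) = 1)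
    (hcells : ∀ j, (Measure.pi fun _ : Fin n => Fhat).real (laguerre xbar lam' j) =
      (Measure.pi fun _ : Fin n => Fm).real (laguerre xbar lam j))
    (i : Fin n) :
    (Measure.pi fun _ : Fin n => Fm).real (laguerre xbar lam i \ laguerre xbar lam' i) ≤
      n * Δ := by
  have : Nonempty (Fin n) := ⟨i⟩
  have := nullSingletonClass_of_continuous_mcdf hFcont
  set T := overtakers lam lam' i
  have hsub : groupCell lam T ⊆ groupCell lam' T :=
    groupCell_subset_groupCell fun j hj k hk => sub_le_sub_of_mem_overtakers hj hk
  have hae : laguerre xbar lam i \ laguerre xbar lam' i ≤ᵐ[Measure.pi fun _ => Fm]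
      groupCell lam' T \ groupCell lam T := by
    filter_upwards [ae_injective_add Fm lam'] with x hinj ⟨hi, hi'⟩
    obtain ⟨k, hk⟩ := mem_iUnion.1 (mem_iUnion_laguerre_of_injective hi.1 hinj)
    exact mem_groupCell_sdiff_of_mem_laguerre hi hk (by rintro rfl; exact hi' hk)
  have hhat : (Measure.pi fun _ => Fhat).real (groupCell lam' T) =
      (Measure.pi fun _ => Fm).real (groupCell lam T) := by
    have hsum' : ∑ j, (Measure.pi fun _ => Fhat).real (laguerre xbar lam' j) = 1 := by
      simpa only [hcells] using hsum
    rw [measureReal_groupCell (ae_mem_iUnion_laguerre hsum'),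
      measureReal_groupCell (ae_mem_iUnion_laguerre hsum)]
    exact Finset.sum_congr rfl fun j _ => hcells j
  calc (Measure.pi fun _ => Fm).real (laguerre xbar lam i \ laguerre xbar lam' i)
      ≤ (Measure.pi fun _ => Fm).real (groupCell lam' T \ groupCell lam T) :=
        ENNReal.toReal_mono (by finiteness) (measure_mono_ae hae)
    _ = (Measure.pi fun _ => Fm).real (groupCell lam' T) -
          (Measure.pi fun _ => Fm).real (groupCell lam T) :=
        measureReal_sdiff hsub (measurableSet_groupCell lam T)
    _ ≤ n * Δ := by linarith [measureReal_groupCell_le_add hFcont hclose lam' T]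

lemma setIntegral_laguerre_le_add {Fm Fhat : Measure ℝ} [IsProbabilityMeasure Fm]
    [IsProbabilityMeasure Fhat] {Δ : ℝ} (hFcont : Continuous (mcdf Fm))
    (hclose : ∀ x, |mcdf Fhat x - mcdf Fm x| ≤ Δ) (hxbar : 0 ≤ xbar) {lam lam' : Fin n → ℝ}
    (hsum : ∑ j, (Measure.pi fun _ : Fin n => Fm).real (laguerre xbar lam j) = 1)
    (hcells : ∀ j, (Measure.pi fun _ : Fin n => Fhat).real (laguerre xbar lam' j) =
      (Measure.pi fun _ : Fin n => Fm).real (laguerre xbar lam j))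
    (i : Fin n) :
    ∫ x in laguerre xbar lam i, x i ∂(Measure.pi fun _ => Fm) ≤
      ∫ x in laguerre xbar lam' i, x i ∂(Measure.pi fun _ => Fm) + n * Δ * xbar := by
  have hdiff := measureReal_laguerre_sdiff_le hFcont hclose hsum hcells i
  calc ∫ x in laguerre xbar lam i, x i ∂(Measure.pi fun _ => Fm)
      ≤ ∫ x in laguerre xbar lam' i, x i ∂(Measure.pi fun _ => Fm) +
          xbar * (Measure.pi fun _ => Fm).real (laguerre xbar lam i \ laguerre xbar lam' i) :=
        setIntegral_le_setIntegral_add_mul_measureReal_sdiff (measurableSet_laguerre _ _)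
          (measurableSet_laguerre _ _) (measurable_pi_apply i).aestronglyMeasurable
          fun x hx => hx.elim (fun h => h.1 i) (fun h => h.1 i)
    _ ≤ ∫ x in laguerre xbar lam' i, x i ∂(Measure.pi fun _ => Fm) + n * Δ * xbar := by
        nlinarith

end CellMeasures

theorem single_epoch_regret_bound_general
    {Ω : Type*} [MeasurableSpace Ω] (μ : Measure Ω) [IsProbabilityMeasure μ]
    {n : ℕ} (xbar Δ : ℝ) (m : ℕ)
    (Fm Fhat : Measure ℝ) [IsProbabilityMeasure Fm] [IsProbabilityMeasure Fhat]
    (hFsupp : Fm (Set.Icc (0 : ℝ) xbar) = 1)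
    (hFcont : Continuous (mcdf Fm))
    (hclose : ∀ x, |mcdf Fhat x - mcdf Fm x| ≤ Δ)
    (pstar : Fin n → ℝ) (hsum : ∑ j, pstar j = 1)
    (lamhat lamstar : Fin n → ℝ)
    (hlamhat : ∀ j,
      ((Measure.pi fun _ : Fin n => Fhat) (laguerre xbar lamhat j)).toReal = pstar j)
    (hlamstar : ∀ j,
      ((Measure.pi fun _ : Fin n => Fm) (laguerre xbar lamstar j)).toReal = pstar j)
    (X : Fin m → Ω → Fin n → ℝ) (hXmeas : ∀ t, Measurable (X t))
    (hXindep : iIndepFun X μ)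
    (hXlaw : ∀ t, μ.map (X t) = Measure.pi fun _ : Fin n => Fm)
    (i : Fin n) (δ : ℝ) (hδ : δ ∈ Set.Ioo (0 : ℝ) 1) :
    ENNReal.ofReal (1 - δ) ≤
      μ {ω |
        (m : ℝ) * (∫ x in laguerre xbar lamstar i, x i ∂(Measure.pi fun _ : Fin n => Fm)) -
            (∑ t, X t ω i *
              Set.indicator (laguerre xbar lamhat i) (fun _ => (1 : ℝ)) (X t ω)) ≤
          n * Δ * xbar * m + xbar * Real.sqrt ((m / 2) * Real.log (2 / δ))} := by
  obtain ⟨hδ0, hδ1⟩ := hδ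
  have := nullSingletonClass_of_continuous_mcdf hFcont
  have hxbar : 0 < xbar := lt_of_measure_Icc_eq_one hFsupp
  rcases m.eq_zero_or_pos with rfl | hm
  · simpa using hδ0.le
  set V := laguerre xbar lamhat i
  have hV : MeasurableSet V := measurableSet_laguerre lamhat i
  have hutility (x : Fin n → ℝ) :
      x i * V.indicator (fun _ => 1) x = V.indicator (fun x => x i) x := by
    by_cases hx : x ∈ V <;> simp [hx]
  have hutility_mem (x : Fin n → ℝ) : V.indicator (fun x => x i) x ∈ Icc 0 xbar := by
    by_cases hx : x ∈ V
    · simpa [hx] using hx.1 i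
    · simpa [hx] using hxbar.le
  have hdet := setIntegral_laguerre_le_add hFcont hclose hxbar.le
    ((Finset.sum_congr rfl fun j _ => hlamstar j).trans hsum)
    (fun j => (hlamhat j).trans (hlamstar j).symm) i
  have htail := measureReal_sum_integral_sub_ge_le_of_identDistrib hXmeas hXindep hXlaw
    ((measurable_pi_apply i).indicator hV) hutility_mem hm hxbar ⟨hδ0, by linarith⟩
  rw [integral_indicator hV] at htail
  refine ofReal_one_sub_le_of_measureReal_compl_le
    ((measureReal_mono fun ω hω => ?_).trans (htail.trans (by linarith)))
  simp only [mem_compl_iff, mem_ofPred_eq, not_le, hutility] at hω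
  simp only [mem_ofPred_eq, Finset.sum_sub_distrib, Finset.sum_const, Finset.card_univ,
    Fintype.card_fin, nsmul_eq_mul]
  nlinarith

/-- **Single-epoch regret bound.**  `F` is a continuous CDF on `[0,x̄]` and `F̂` a CDF with
`sup_x |F̂(x) − F(x)| ≤ Δ`.  `λ̂` achieves the target fractions `p*` under `F̂ ⊗ … ⊗ F̂`, and
`λ*` under `F ⊗ … ⊗ F`.  If `X 1, …, X m` are i.i.d. with law `F ⊗ … ⊗ F`, then for each
agent `i` and `δ ∈ (0,1)`, with probability at least `1 − δ`,
`m E[Xᵢ 1{X ∈ L_i(λ*)}] − ∑_t X_{t,i} 1{X_t ∈ L_i(λ̂)} ≤ n Δ x̄ m + x̄ √((m/2) log(2/δ))`. -/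
theorem single_epoch_regret_bound
    {Ω : Type*} [MeasurableSpace Ω] (μ : Measure Ω) [IsProbabilityMeasure μ]
    {n : ℕ} (xbar Δ : ℝ) (m : ℕ)
    (Fm Fhat : Measure ℝ) [IsProbabilityMeasure Fm] [IsProbabilityMeasure Fhat]
    (hFsupp : Fm (Set.Icc (0 : ℝ) xbar) = 1)
    (hFhatsupp : Fhat (Set.Icc (0 : ℝ) xbar) = 1)
    (hFcont : Continuous (mcdf Fm))
    (hclose : ∀ x, |mcdf Fhat x - mcdf Fm x| ≤ Δ)
    (pstar : Fin n → ℝ) (hpos : ∀ j, 0 < pstar j) (hsum : ∑ j, pstar j = 1)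
    (lamhat lamstar : Fin n → ℝ)
    (hlamhat : ∀ j,
      ((Measure.pi fun _ : Fin n => Fhat) (laguerre xbar lamhat j)).toReal = pstar j)
    (hlamstar : ∀ j,
      ((Measure.pi fun _ : Fin n => Fm) (laguerre xbar lamstar j)).toReal = pstar j)
    (X : Fin m → Ω → Fin n → ℝ) (hXmeas : ∀ t, Measurable (X t))
    (hXindep : iIndepFun X μ)
    (hXlaw : ∀ t, μ.map (X t) = Measure.pi fun _ : Fin n => Fm)
    (i : Fin n) (δ : ℝ) (hδ : δ ∈ Set.Ioo (0 : ℝ) 1) :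
    ENNReal.ofReal (1 - δ) ≤
      μ {ω |
        (m : ℝ) * (∫ x in laguerre xbar lamstar i, x i ∂(Measure.pi fun _ : Fin n => Fm)) -
            (∑ t, X t ω i *
              Set.indicator (laguerre xbar lamhat i) (fun _ => (1 : ℝ)) (X t ω)) ≤
          n * Δ * xbar * m + xbar * Real.sqrt ((m / 2) * Real.log (2 / δ))} :=
  single_epoch_regret_bound_general μ xbar Δ m Fm Fhat hFsupp hFcont hclose pstar hsum lamhat
    lamstar hlamhat hlamstar X hXmeas hXindep hXlaw i δ hδ
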